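/- The alternating series ∑_{n=0}^∞ (-1)^n · H_n / binom(2n,n) converges and equals ((4 − log 5)/(5√5)) · log((√5 − 1)/(√5 + 1)) − (2/(5√5)) · ( Li₂((√5 + 1)/(2√5)) − Li₂((√5 − 1)/(2√5)) ). -/

import Mathlib

/-!
Since `(-1)ⁿ / binom(2n,n) = (2n+1) ∫₀¹ (t² - t)ⁿ dt`, the series equals `∫₀¹ G(t² - t) dt`
with `G(y) = ∑ (2n+1) Hₙ yⁿ = (2y - (1+y) log(1-y)) / (1-y)²`, which in turn comes from
`∑ Hₙ yⁿ = -log(1-y)/(1-y)` by Cauchy products with the geometric series. On `[0, 1]` the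
quantity `1 - (t² - t) = (φ - t)(t - ψ)` factors over the golden ratio, and partial fractions
in `φ - t` and `t - ψ` (whose sum is `√5`) give an explicit primitive; its dilogarithms come
from `∫ log(t - ψ)/(φ - t)` and `∫ log(φ - t)/(t - ψ)`. Evaluating the primitive at `0` and
`1`, where `φ - t` and `t - ψ` swap the values `φ` and `-ψ = φ⁻¹`, gives the closed form.
-/

open Real

/-- The real dilogarithm `Li₂(x) = ∑_{n=1}^∞ xⁿ/n²`. -/
noncomputable def Li2 (x : ℝ) : ℝ := ∑' n : ℕ, x ^ (n + 1) / (n + 1) ^ 2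

open Filter Finset MeasureTheory
open scoped goldenRatio

lemma hasSum_partialSum_mul_pow {a : ℕ → ℝ} {y A : ℝ} (hy : |y| < 1)
    (ha : HasSum (fun n => a n * y ^ n) A) (ha' : Summable fun n => ‖a n * y ^ n‖) :
    HasSum (fun n => (∑ k ∈ range (n + 1), a k) * y ^ n) (A / (1 - y)) := by
  have hgeom : Summable fun n => ‖y ^ n‖ := by
    simpa [norm_pow] using summable_geometric_of_lt_one (abs_nonneg y) hy
  have h := hasSum_sum_range_mul_of_summable_norm ha' hgeom
  rw [ha.tsum_eq, tsum_geometric_of_abs_lt_one hy, ← div_eq_mul_inv] at h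
  refine h.congr_fun fun n => ?_
  rw [sum_mul]
  refine sum_congr rfl fun k hk => ?_
  rw [mul_assoc, ← pow_add, Nat.add_sub_cancel' (Nat.lt_succ_iff.mp (mem_range.mp hk))]

lemma summable_norm_mul_pow {a : ℕ → ℝ} {y : ℝ} (ha0 : ∀ n, 0 ≤ a n)
    (ha : Summable fun n => a n * |y| ^ n) : Summable fun n => ‖a n * y ^ n‖ := by
  simpa [norm_mul, norm_pow, abs_of_nonneg (ha0 _)] using ha

lemma hasSum_inv_mul_pow {y : ℝ} (hy : |y| < 1) :
    HasSum (fun n : ℕ => (n : ℝ)⁻¹ * y ^ n) (-log (1 - y)) := by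
  rw [← hasSum_nat_add_iff' 1]
  simpa [div_eq_inv_mul] using hasSum_pow_div_log_of_abs_lt_one hy

-- The `k = 0` term is the junk value `(0 : ℝ)⁻¹ = 0`.
lemma harmonic_eq_sum_range_inv (n : ℕ) :
    (harmonic n : ℝ) = ∑ k ∈ range (n + 1), (k : ℝ)⁻¹ := by
  induction n with
  | zero => simp
  | succ n ih => rw [sum_range_succ, ← ih, harmonic_succ]; push_cast; ring

lemma harmonic_cast_nonneg (n : ℕ) : 0 ≤ (harmonic n : ℝ) := by
  rw [harmonic_eq_sum_range_inv]; positivity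

lemma sum_range_harmonic (n : ℕ) :
    ∑ k ∈ range (n + 1), (harmonic k : ℝ) = (n + 1) * harmonic n - n := by
  induction n with
  | zero => simp
  | succ n ih =>
    rw [sum_range_succ, ih, harmonic_succ]
    push_cast
    field_simp
    ring

lemma hasSum_harmonic_mul_pow {y : ℝ} (hy : |y| < 1) :
    HasSum (fun n => (harmonic n : ℝ) * y ^ n) (-log (1 - y) / (1 - y)) := by
  have h := hasSum_partialSum_mul_pow hy (hasSum_inv_mul_pow hy)
    (summable_norm_mul_pow (fun n => by positivity)
      (hasSum_inv_mul_pow (y := |y|) (by simpa)).summable)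
  simpa only [← harmonic_eq_sum_range_inv] using h

lemma hasSum_succ_mul_harmonic_sub_mul_pow {y : ℝ} (hy : |y| < 1) :
    HasSum (fun n => ((n + 1) * (harmonic n : ℝ) - n) * y ^ n) (-log (1 - y) / (1 - y) ^ 2) := by
  have h := hasSum_partialSum_mul_pow hy (hasSum_harmonic_mul_pow hy)
    (summable_norm_mul_pow harmonic_cast_nonneg
      (hasSum_harmonic_mul_pow (y := |y|) (by simpa)).summable)
  simpa only [sum_range_harmonic, div_div, ← sq] using h

noncomputable def oddHarmonicGF (y : ℝ) : ℝ := (2 * y - (1 + y) * log (1 - y)) / (1 - y) ^ 2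

lemma hasSum_oddHarmonicGF {y : ℝ} (hy : |y| < 1) :
    HasSum (fun n => (2 * n + 1) * (harmonic n : ℝ) * y ^ n) (oddHarmonicGF y) := by
  have hy1 : 1 - y ≠ 0 := by linarith [le_abs_self y]
  have h := (((hasSum_succ_mul_harmonic_sub_mul_pow hy).mul_left 2).sub
    (hasSum_harmonic_mul_pow hy)).add
    ((hasSum_coe_mul_geometric_of_norm_lt_one (r := y) (by simpa using hy)).mul_left 2)
  have hG : 2 * (-log (1 - y) / (1 - y) ^ 2) - -log (1 - y) / (1 - y) + 2 * (y / (1 - y) ^ 2)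
      = oddHarmonicGF y := by
    rw [oddHarmonicGF]; field_simp; ring
  rw [← hG]
  exact h.congr_fun fun n => by ring

lemma integral_sq_sub_pow_succ (n : ℕ) :
    (4 * n + 6) * ∫ t in (0 : ℝ)..1, (t ^ 2 - t) ^ (n + 1)
      = -(n + 1) * ∫ t in (0 : ℝ)..1, (t ^ 2 - t) ^ n := by
  have hderiv : ∀ t : ℝ, HasDerivAt (fun t => (2 * t - 1) * (t ^ 2 - t) ^ (n + 1))
      ((4 * n + 6) * (t ^ 2 - t) ^ (n + 1) + (n + 1) * (t ^ 2 - t) ^ n) t := by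
    intro t
    have hlin : HasDerivAt (fun t : ℝ => 2 * t - 1) 2 t :=
      (((hasDerivAt_id t).const_mul 2).sub_const 1).congr_deriv (mul_one 2)
    have hquad : HasDerivAt (fun t : ℝ => t ^ 2 - t) (2 * t - 1) t :=
      ((hasDerivAt_pow 2 t).sub (hasDerivAt_id t)).congr_deriv (by norm_num)
    refine (hlin.mul (hquad.pow (n + 1))).congr_deriv ?_
    rw [Nat.add_sub_cancel, Pi.pow_apply]
    push_cast
    ring
  have hFTC := intervalIntegral.integral_eq_sub_of_hasDerivAt (a := 0) (b := 1)
    (fun t _ => hderiv t) (by apply Continuous.intervalIntegrable; fun_prop)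
  rw [intervalIntegral.integral_add (by apply Continuous.intervalIntegrable; fun_prop)
    (by apply Continuous.intervalIntegrable; fun_prop), intervalIntegral.integral_const_mul,
    intervalIntegral.integral_const_mul] at hFTC
  have hboundary : (2 * (1 : ℝ) - 1) * (1 ^ 2 - 1) ^ (n + 1) - (2 * 0 - 1) * (0 ^ 2 - 0) ^ (n + 1)
      = 0 := by simp
  linarith

lemma integral_sq_sub_pow (n : ℕ) :
    ∫ t in (0 : ℝ)..1, (t ^ 2 - t) ^ n
      = (-1) ^ n / ((2 * n + 1) * (Nat.centralBinom n : ℝ)) := by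
  induction n with
  | zero => simp
  | succ n ih =>
    have hrec := integral_sq_sub_pow_succ n
    set J := ∫ t in (0 : ℝ)..1, (t ^ 2 - t) ^ (n + 1)
    have hC : (Nat.centralBinom (n + 1) : ℝ)
        = 2 * (2 * n + 1) * Nat.centralBinom n / (n + 1) := by
      rw [eq_div_iff (by positivity)]
      exact_mod_cast (mul_comm _ _).trans (Nat.succ_mul_centralBinom_succ n)
    have hC0 : (Nat.centralBinom n : ℝ) ≠ 0 := Nat.cast_ne_zero.mpr (Nat.centralBinom_ne_zero n)
    rw [ih] at hrec
    rw [hC]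
    field_simp at hrec ⊢
    push_cast
    linear_combination hrec

lemma hasSum_integral_oddHarmonicGF :
    HasSum (fun n : ℕ => (-1) ^ n * (harmonic n : ℝ) / Nat.centralBinom n)
      (∫ t in (0 : ℝ)..1, oddHarmonicGF (t ^ 2 - t)) := by
  have hquarter : ∀ t ∈ Set.uIoc (0 : ℝ) 1, |t ^ 2 - t| ≤ 1 / 4 := by
    rintro t ⟨ht0, ht1⟩
    simp only [zero_le_one, inf_of_le_left, sup_of_le_right] at ht0 ht1
    rw [abs_le]
    constructor <;> nlinarith [sq_nonneg (2 * t - 1)]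
  have hterm : ∀ n : ℕ,
      ∫ t in (0 : ℝ)..1, (2 * n + 1) * (harmonic n : ℝ) * (t ^ 2 - t) ^ n
      = (-1) ^ n * (harmonic n : ℝ) / Nat.centralBinom n := fun n => by
    rw [intervalIntegral.integral_const_mul, integral_sq_sub_pow]
    field_simp
  simp only [← hterm]
  refine intervalIntegral.hasSum_integral_of_dominated_convergence
    (fun n _ => (2 * n + 1) * (harmonic n : ℝ) * (1 / 4) ^ n)
    (fun n => (by fun_prop : Continuous _).aestronglyMeasurable)
    (fun n => Eventually.of_forall fun t ht => ?_)
    (Eventually.of_forall fun t _ => (hasSum_oddHarmonicGF (by norm_num)).summable)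
    intervalIntegrable_const
    (Eventually.of_forall fun t ht => hasSum_oddHarmonicGF ((hquarter t ht).trans_lt (by norm_num)))
  have hcoeff : 0 ≤ (2 * n + 1) * (harmonic n : ℝ) := by
    have := harmonic_cast_nonneg n; positivity
  rw [norm_mul, norm_pow, Real.norm_eq_abs, abs_of_nonneg hcoeff]
  exact mul_le_mul_of_nonneg_left (pow_le_pow_left₀ (abs_nonneg _) (hquarter t ht) n) hcoeff

lemma hasSum_pow_div_succ {x : ℝ} (hx : |x| < 1) (hx0 : x ≠ 0) :
    HasSum (fun n : ℕ => x ^ n / (n + 1)) (-log (1 - x) / x) := by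
  refine ((hasSum_pow_div_log_of_abs_lt_one hx).div_const x).congr_fun fun n => ?_
  rw [pow_succ]
  field_simp

lemma hasDerivAt_Li2 {x : ℝ} (hx : |x| < 1) (hx0 : x ≠ 0) :
    HasDerivAt Li2 (-log (1 - x) / x) x := by
  obtain ⟨r, hxr, hr⟩ := exists_between hx
  have hr0 : 0 < r := (abs_nonneg x).trans_lt hxr
  rw [← (hasSum_pow_div_succ hx hx0).tsum_eq]
  unfold Li2
  refine hasDerivAt_tsum_of_isPreconnected (u := fun n : ℕ => r ^ n)
    (g' := fun n y => y ^ n / ((n : ℝ) + 1)) (t := Metric.ball 0 r) (y₀ := (0 : ℝ))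
    (summable_geometric_of_lt_one hr0.le hr) Metric.isOpen_ball (convex_ball 0 r).isPreconnected
    (fun n y _ => ?_) (fun n y hy => ?_) (Metric.mem_ball_self hr0) ?_ (by simpa using hxr)
  · refine ((hasDerivAt_pow (n + 1) y).div_const (((n : ℝ) + 1) ^ 2)).congr_deriv ?_
    rw [Nat.add_sub_cancel]
    push_cast
    field_simp
  · rw [Metric.mem_ball, dist_zero_right] at hy
    rw [norm_div, norm_pow, Real.norm_of_nonneg (by positivity : (0 : ℝ) ≤ n + 1)]
    calc ‖y‖ ^ n / (n + 1) ≤ ‖y‖ ^ n :=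
          div_le_self (by positivity) (by linarith [n.cast_nonneg (α := ℝ)])
      _ ≤ r ^ n := pow_le_pow_left₀ (norm_nonneg y) hy.le n
  · simp

noncomputable def oddHarmonicGFPrimitive (t : ℝ) : ℝ :=
  -(2 / 5) * (log (φ - t) + log (t - ψ)) * ((φ - t)⁻¹ - (t - ψ)⁻¹)
    + ((log (t - ψ) - log (φ - t)) * ((log (φ - t) + log (t - ψ)) / 2 + log √5 - 2)
      + (Li2 ((φ - t) / √5) - Li2 ((t - ψ) / √5))) / (5 * √5)

lemma hasDerivAt_Li2_sub {t : ℝ} (ht : t ∈ Set.Ioo ψ φ) :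
    HasDerivAt (fun t => Li2 ((φ - t) / √5) - Li2 ((t - ψ) / √5))
      (log ((t - ψ) / √5) / (φ - t) + log ((φ - t) / √5) / (t - ψ)) t := by
  obtain ⟨hψ, hφ⟩ := ht
  have hs : (0 : ℝ) < √5 := by positivity
  have hsum : (φ - t) + (t - ψ) = √5 := by rw [← goldenRatio_sub_goldenConj]; ring
  have hP : 0 < (φ - t) / √5 := div_pos (by linarith) hs
  have hQ : 0 < (t - ψ) / √5 := div_pos (by linarith) hs
  have hP1 : 1 - (φ - t) / √5 = (t - ψ) / √5 := by field_simp; linarith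
  have hQ1 : 1 - (t - ψ) / √5 = (φ - t) / √5 := by field_simp; linarith
  have habs : ∀ x : ℝ, 0 < x → 0 < 1 - x → |x| < 1 := fun x h0 h1 => by
    rw [abs_of_pos h0]; linarith
  have hLiP := (hasDerivAt_Li2 (habs _ hP (hP1 ▸ hQ)) hP.ne').comp t
    (((hasDerivAt_id t).const_sub φ).div_const √5)
  have hLiQ := (hasDerivAt_Li2 (habs _ hQ (hQ1 ▸ hP)) hQ.ne').comp t
    (((hasDerivAt_id t).sub_const ψ).div_const √5)
  refine (hLiP.sub hLiQ).congr_deriv ?_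
  rw [hP1, hQ1]
  field_simp
  ring

lemma hasDerivAt_oddHarmonicGFPrimitive {t : ℝ} (ht : t ∈ Set.Ioo ψ φ) :
    HasDerivAt oddHarmonicGFPrimitive (oddHarmonicGF (t ^ 2 - t)) t := by
  have hLi := hasDerivAt_Li2_sub ht
  obtain ⟨hψ, hφ⟩ := ht
  set P := φ - t with hPdef
  set Q := t - ψ with hQdef
  have hP : 0 < P := by linarith
  have hQ : 0 < Q := by linarith
  have hsum : √5 = P + Q := by rw [← goldenRatio_sub_goldenConj]; ring
  have hprod : 1 - (t ^ 2 - t) = P * Q := by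
    linear_combination goldenRatio_mul_goldenConj - t * goldenRatio_add_goldenConj
  have hlogP : HasDerivAt (fun t => log (φ - t)) (-1 / P) t :=
    ((hasDerivAt_id t).const_sub φ).log hP.ne'
  have hlogQ : HasDerivAt (fun t => log (t - ψ)) (1 / Q) t :=
    ((hasDerivAt_id t).sub_const ψ).log hQ.ne'
  have hinvP : HasDerivAt (fun t => (φ - t)⁻¹) (-(-1) / P ^ 2) t :=
    ((hasDerivAt_id t).const_sub φ).inv hP.ne'
  have hinvQ : HasDerivAt (fun t => (t - ψ)⁻¹) (-1 / Q ^ 2) t :=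
    ((hasDerivAt_id t).sub_const ψ).inv hQ.ne'
  have hmid := (((hlogP.add hlogQ).div_const 2).add_const (log √5)).sub_const 2
  have h := ((((hlogP.add hlogQ).const_mul (-(2 / 5))).mul (hinvP.sub hinvQ)).add
    ((((hlogQ.sub hlogP).mul hmid).add hLi).div_const (5 * √5)))
  refine h.congr_deriv ?_
  have h5 : (P + Q) ^ 2 = 5 := by rw [← hsum]; simp
  simp only [Pi.add_apply, Pi.sub_apply, ← hPdef, ← hQdef]
  clear_value P Q
  rw [oddHarmonicGF, show t ^ 2 - t = 1 - P * Q by linarith, sub_sub_cancel, log_mul hP.ne' hQ.ne',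
    log_div hQ.ne' (by positivity), log_div hP.ne' (by positivity), hsum]
  field_simp
  linear_combination 4 * (P + Q) * (1 - log P - log Q) * h5

lemma continuousOn_oddHarmonicGF : ContinuousOn oddHarmonicGF (Set.Iio 1) := by
  have h : ∀ y ∈ Set.Iio (1 : ℝ), 1 - y ≠ 0 := fun y hy => (sub_pos.mpr hy).ne'
  unfold oddHarmonicGF
  refine ContinuousOn.div ?_ (by fun_prop) fun y hy => pow_ne_zero 2 (h y hy)
  fun_prop (disch := exact h)

lemma integral_oddHarmonicGF_sq_sub :
    ∫ t in (0 : ℝ)..1, oddHarmonicGF (t ^ 2 - t)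
      = oddHarmonicGFPrimitive 1 - oddHarmonicGFPrimitive 0 := by
  have hIcc : Set.uIcc (0 : ℝ) 1 ⊆ Set.Ioo ψ φ := by
    rw [Set.uIcc_of_le zero_le_one]
    exact Set.Icc_subset_Ioo goldenConj_neg one_lt_goldenRatio
  refine intervalIntegral.integral_eq_sub_of_hasDerivAt
    (fun t ht => hasDerivAt_oddHarmonicGFPrimitive (hIcc ht)) ?_
  refine (continuousOn_oddHarmonicGF.comp (by fun_prop) fun t ht => ?_).intervalIntegrable
  obtain ⟨ht0, ht1⟩ := Set.uIcc_of_le (zero_le_one' ℝ) ▸ ht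
  show t ^ 2 - t < 1
  nlinarith

lemma oddHarmonicGFPrimitive_one_sub_zero :
    oddHarmonicGFPrimitive 1 - oddHarmonicGFPrimitive 0
      = ((4 - log 5) / (5 * √5)) * log ((√5 - 1) / (√5 + 1))
        - (2 / (5 * √5)) * (Li2 ((√5 + 1) / (2 * √5)) - Li2 ((√5 - 1) / (2 * √5))) := by
  have hs : (0 : ℝ) < √5 := by positivity
  have hφ : φ = (√5 + 1) / 2 := by rw [goldenRatio]; ring
  have hψ : -ψ = (√5 - 1) / 2 := by rw [goldenConj]; ring
  have hlogψ : log (-ψ) = -log φ := by rw [← inv_goldenRatio, log_inv]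
  have hlog5 : log 5 = 2 * log √5 := by
    rw [← log_rpow hs, rpow_two, sq_sqrt (by norm_num)]
  have hfrac : (√5 - 1) / (√5 + 1) = -ψ / φ := by rw [hφ, hψ]; field_simp
  have hφs : (√5 + 1) / (2 * √5) = φ / √5 := by rw [hφ]; field_simp
  have hψs : (√5 - 1) / (2 * √5) = -ψ / √5 := by rw [hψ]; field_simp
  rw [hfrac, hφs, hψs, log_div (by linarith [goldenConj_neg]) goldenRatio_ne_zero, hlogψ, hlog5]
  simp only [oddHarmonicGFPrimitive, sub_zero, zero_sub, one_sub_goldenRatio,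
    show φ - 1 = -ψ by linarith [goldenRatio_add_goldenConj], hlogψ]
  field_simp
  ring

theorem stmt3 :
    HasSum (fun n : ℕ => (-1) ^ n * (harmonic n : ℝ) / (Nat.centralBinom n : ℝ))
      (((4 - Real.log 5) / (5 * Real.sqrt 5)) *
          Real.log ((Real.sqrt 5 - 1) / (Real.sqrt 5 + 1)) -
        (2 / (5 * Real.sqrt 5)) *
          (Li2 ((Real.sqrt 5 + 1) / (2 * Real.sqrt 5)) -
            Li2 ((Real.sqrt 5 - 1) / (2 * Real.sqrt 5)))) := by
  rw [← oddHarmonicGFPrimitive_one_sub_zero, ← integral_oddHarmonicGF_sq_sub]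
  exact hasSum_integral_oddHarmonicGF
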